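/- Let A, B₁, …, B_m ∈ M_n(𝕂), let τ₁, …, τ_m ∈ (0, r], and let L : C([-r,0],𝕂ⁿ) → 𝕂ⁿ be the continuous linear map Lψ = A ψ(0) + Σ_{k=1}^m B_k ψ(-τ_k). If x is the mild solution of ẋ(t) = L x_t with M¹ initial datum (φ,ξ), then x restricted to [0,∞) is differentiable at almost every t ≥ 0 and its derivative there equals A x(t) + Σ_{k=1}^m B_k x(t - τ_k) for almost every t ≥ 0. -/

import Mathlib

open MeasureTheory

/-- `x` is a mild solution of `ẋ(t) = L x_t` with `M¹` initial datum `(φ, ξ)`: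
history `φ` on `[-r,0)`, value `ξ` at `0`, continuous on `[0,∞)`, and
`x(t) = ξ + L(∫_0^t x_s ds)` for all `t ≥ 0`, where `∫_0^t x_s ds` is the continuous
function `[-r,0] → 𝕂ⁿ`, `θ ↦ ∫_θ^{t+θ} x(s) ds`. -/
def IsMildSol {𝕜 : Type*} [RCLike 𝕜] {n : ℕ} (r : ℝ)
    (L : C(Set.Icc (-r) (0:ℝ), Fin n → 𝕜) →L[𝕜] (Fin n → 𝕜))
    (φ : ℝ → Fin n → 𝕜) (ξ : Fin n → 𝕜) (x : ℝ → Fin n → 𝕜) : Prop :=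
  (∀ θ ∈ Set.Ico (-r) (0:ℝ), x θ = φ θ) ∧ x 0 = ξ ∧
  ContinuousOn x (Set.Ici (0:ℝ)) ∧
  ∀ t, 0 ≤ t → ∃ ψ : C(Set.Icc (-r) (0:ℝ), Fin n → 𝕜),
    (∀ θ : Set.Icc (-r) (0:ℝ), ψ θ = ∫ s in (θ : ℝ)..(t + (θ : ℝ)), x s) ∧
    x t = ξ + L ψ

open Set Filter Topology intervalIntegral

lemma my_ae_ftc {E : Type*} [NormedAddCommGroup E] [NormedSpace ℝ E] [CompleteSpace E]
    {g : ℝ → E} (hg : LocallyIntegrable g volume) :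
    ∀ᵐ t, HasDerivAt (fun u => ∫ s in (0:ℝ)..u, g s) (g t) t := by
  have hint : ∀ a b : ℝ, IntervalIntegrable g volume a b := fun a b =>
    intervalIntegrable_iff.mpr
      ((hg.integrableOn_isCompact isCompact_uIcc).mono_set Set.uIoc_subset_uIcc)
  set v := IsUnifLocDoublingMeasure.vitaliFamily (volume : Measure ℝ) 1 with hv
  filter_upwards [v.ae_tendsto_average_norm_sub hg] with t ht
  have hR : Tendsto (fun y => ⨍ s in Icc t y, ‖g s - g t‖) (𝓝[>] t) (𝓝 0) :=
    ht.comp (Real.tendsto_Icc_vitaliFamily_right t)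
  have hLt : Tendsto (fun y => ⨍ s in Icc y t, ‖g s - g t‖) (𝓝[<] t) (𝓝 0) :=
    ht.comp (Real.tendsto_Icc_vitaliFamily_left t)
  rw [hasDerivAt_iff_tendsto]
  set B : ℝ → ℝ := fun y => ⨍ s in Icc (min t y) (max t y), ‖g s - g t‖ with hBdef
  have hB0 : B t = 0 := by
    simp [hBdef, setAverage_eq]
  have hBle : ∀ y, ‖y - t‖⁻¹ * ‖(∫ s in (0:ℝ)..y, g s) - (∫ s in (0:ℝ)..t, g s) - (y - t) • g t‖ ≤ B y := by
    intro y
    rcases eq_or_ne y t with rfl | hyt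
    · simp [hB0]
    · have h1 : (∫ s in (0:ℝ)..y, g s) - (∫ s in (0:ℝ)..t, g s) = ∫ s in t..y, g s :=
        integral_interval_sub_left (hint 0 y) (hint 0 t)
      have h2 : (y - t) • g t = ∫ s in t..y, g t := by simp
      have h3 : (∫ s in (0:ℝ)..y, g s) - (∫ s in (0:ℝ)..t, g s) - (y - t) • g t
          = ∫ s in t..y, (g s - g t) := by
        rw [h1, h2, integral_sub (hint t y) (intervalIntegrable_const)]
      rw [h3]
      have h4 : ‖∫ s in t..y, (g s - g t)‖ ≤ ∫ s in Icc (min t y) (max t y), ‖g s - g t‖ := by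
        refine norm_integral_le_integral_norm_uIoc.trans ?_
        rw [uIoc, ← integral_Icc_eq_integral_Ioc]
      have h5 : B y = ‖y - t‖⁻¹ * ∫ s in Icc (min t y) (max t y), ‖g s - g t‖ := by
        rw [hBdef]
        simp only [setAverage_eq, Real.volume_Icc, smul_eq_mul]
        congr 1
        rw [Real.volume_real_Icc_of_le min_le_max]
        rcases le_total t y with h|h
        · rw [max_eq_right h, min_eq_left h, Real.norm_eq_abs, abs_of_nonneg (by linarith)]
        · rw [max_eq_left h, min_eq_right h, Real.norm_eq_abs, abs_of_nonpos (by linarith)]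
          ring_nf
      rw [h5]
      gcongr
  have hBtendsto : Tendsto B (𝓝 t) (𝓝 0) := by
    have hsplit : 𝓝 t = (𝓝[<] t ⊔ 𝓝[>] t) ⊔ pure t := by
      rw [nhdsLT_sup_nhdsGT, nhdsNE_sup_pure]
    rw [hsplit, tendsto_sup, tendsto_sup]
    refine ⟨⟨?_, ?_⟩, ?_⟩
    · refine hLt.congr' ?_
      filter_upwards [self_mem_nhdsWithin] with y (hy : y < t)
      simp [hBdef, min_eq_right hy.le, max_eq_left hy.le]
    · refine hR.congr' ?_
      filter_upwards [self_mem_nhdsWithin] with y (hy : t < y)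
      simp [hBdef, min_eq_left hy.le, max_eq_right hy.le]
    · simpa [hB0] using tendsto_pure_nhds B t
  exact squeeze_zero (fun y => by positivity) hBle hBtendsto

lemma my_locInt {E : Type*} [NormedAddCommGroup E] {f : ℝ → E}
    (h : ∀ a b : ℝ, IntervalIntegrable f volume a b) : LocallyIntegrable f volume := by
  rw [locallyIntegrable_iff]
  intro K hK
  obtain ⟨R, hR⟩ := hK.isBounded.subset_closedBall 0
  have hK' : K ⊆ Icc (-|R|) |R| := by
    refine hR.trans ?_
    rw [Real.closedBall_eq_Icc, zero_sub, zero_add]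
    exact Icc_subset_Icc (neg_le_neg (le_abs_self R)) (le_abs_self R)
  exact ((intervalIntegrable_iff_integrableOn_Icc_of_le
    ((neg_abs_le R).trans (le_abs_self R))).mp (h _ _)).mono_set hK'

/-- For `Lψ = A ψ(0) + Σ_k B_k ψ(-τ_k)`, the mild solution with `M¹` initial datum
`(φ, ξ)` is differentiable (within `[0,∞)`) at almost every `t ≥ 0` with derivative
`A x(t) + Σ_k B_k x(t - τ_k)`. -/
theorem stmt_4 {𝕜 : Type*} [RCLike 𝕜] {n : ℕ} (hn : 0 < n) {r : ℝ} (hr : 0 < r)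
    (L : C(Set.Icc (-r) (0:ℝ), Fin n → 𝕜) →L[𝕜] (Fin n → 𝕜))
    (A : (Fin n → 𝕜) →L[𝕜] (Fin n → 𝕜))
    {m : ℕ} (B : Fin m → ((Fin n → 𝕜) →L[𝕜] (Fin n → 𝕜)))
    (τ : Fin m → ℝ) (hτ : ∀ k, τ k ∈ Set.Ioc (0:ℝ) r)
    (hL : ∀ ψ : C(Set.Icc (-r) (0:ℝ), Fin n → 𝕜),
      L ψ = A (ψ ⟨0, Set.mem_Icc.mpr ⟨by linarith, le_rfl⟩⟩) +
        ∑ k, B k (ψ ⟨-τ k, Set.mem_Icc.mpr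
          ⟨by have := (hτ k).2; linarith, by have := (hτ k).1; linarith⟩⟩))
    (φ : ℝ → Fin n → 𝕜) (ξ : Fin n → 𝕜)
    (hφ : IntegrableOn φ (Set.Ico (-r) (0:ℝ)))
    (x : ℝ → Fin n → 𝕜) (hx : IsMildSol r L φ ξ x) :
    ∀ᵐ t ∂(volume.restrict (Set.Ici (0:ℝ))),
      HasDerivWithinAt x (A (x t) + ∑ k, B k (x (t - τ k))) (Set.Ici (0:ℝ)) t := by
  classical
  obtain ⟨hist, hx0, hcont, hmild⟩ := hx
  set x' : ℝ → Fin n → 𝕜 := fun s => if -r ≤ s then x s else 0 with hx'def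
  -- integrability of x' on intervals
  have hx'Icc : ∀ a b : ℝ, IntegrableOn x' (Icc a b) := by
    intro a b
    have I1 : IntegrableOn x' (Iio (-r)) := by
      refine (integrableOn_zero (μ := volume)).congr_fun (fun s hs => ?_) measurableSet_Iio
      simp only [hx'def]
      rw [if_neg (by simpa using not_le.mpr hs)]
    have I2 : IntegrableOn x' (Ico (-r) 0) := by
      refine hφ.congr_fun (fun s hs => ?_) measurableSet_Ico
      simp only [hx'def]
      rw [if_pos hs.1]
      exact (hist s hs).symm
    have I3 : IntegrableOn x' (Icc 0 (max b 0)) := by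
      have hc : ContinuousOn x (Icc 0 (max b 0)) :=
        hcont.mono (fun s hs => hs.1)
      refine (hc.integrableOn_Icc).congr_fun (fun s hs => ?_) measurableSet_Icc
      simp only [hx'def]
      rw [if_pos (by linarith [hs.1])]
    refine ((I1.union I2).union I3).mono_set (fun s hs => ?_)
    rcases lt_or_ge s (-r) with h | h
    · exact Or.inl (Or.inl h)
    rcases lt_or_ge s 0 with h' | h'
    · exact Or.inl (Or.inr ⟨h, h'⟩)
    · exact Or.inr ⟨h', hs.2.trans (le_max_left b 0)⟩
  have hx'int : ∀ a b : ℝ, IntervalIntegrable x' volume a b := fun a b =>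
    intervalIntegrable_iff.mpr ((hx'Icc (min a b) (max a b)).mono_set
      (by rw [uIoc]; exact Set.Ioc_subset_Icc_self))
  set g : ℝ → Fin n → 𝕜 := fun s => A (x' s) + ∑ k, B k (x' (s - τ k)) with hgdef
  have hAint : ∀ a b : ℝ, IntervalIntegrable (fun s => A (x' s)) volume a b := fun a b =>
    ⟨A.integrable_comp (hx'int a b).1, A.integrable_comp (hx'int a b).2⟩
  have hBint : ∀ (k : Fin m) (a b : ℝ),
      IntervalIntegrable (fun s => B k (x' (s - τ k))) volume a b := by
    intro k a b
    have h1 : IntervalIntegrable (fun s => x' (s - τ k)) volume a b := by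
      have := (hx'int (a - τ k) (b - τ k)).comp_sub_right (τ k)
      simpa using this
    exact ⟨(B k).integrable_comp h1.1, (B k).integrable_comp h1.2⟩
  have hgint : ∀ a b : ℝ, IntervalIntegrable g volume a b := by
    intro a b
    have h := (hAint a b).add
      (IntervalIntegrable.sum Finset.univ (fun k _ => hBint k a b))
    simp only [Pi.add_apply, Finset.sum_apply] at h
    exact h
  have hgloc : LocallyIntegrable g volume := my_locInt hgint
  -- key identity
  have key : ∀ t ∈ Ici (0:ℝ), x t = ξ + ∫ s in (0:ℝ)..t, g s := by
    intro t ht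
    have ht : (0:ℝ) ≤ t := ht
    obtain ⟨ψ, hψ, hxt⟩ := hmild t ht
    rw [hL ψ] at hxt
    simp only [hψ] at hxt
    have hsum : ∫ s in (0:ℝ)..t, g s
        = (∫ s in (0:ℝ)..t, A (x' s)) + ∑ k, ∫ s in (0:ℝ)..t, B k (x' (s - τ k)) := by
      have h1 := intervalIntegral.integral_add (hAint 0 t)
        (IntervalIntegrable.sum Finset.univ (fun k _ => hBint k 0 t))
      simp only [Finset.sum_apply] at h1
      simp only [hgdef]
      rw [h1, intervalIntegral.integral_finset_sum (fun k _ => hBint k 0 t)]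
    have hA' : (∫ s in (0:ℝ)..t, A (x' s)) = A (∫ s in (0:ℝ)..(t + 0), x s) := by
      rw [A.intervalIntegral_comp_comm (hx'int 0 t)]
      congr 1
      rw [add_zero]
      refine intervalIntegral.integral_congr (fun s hs => ?_)
      rw [uIcc_of_le ht] at hs
      simp only [hx'def]
      rw [if_pos (by linarith [hs.1])]
    have hB' : ∀ k : Fin m, (∫ s in (0:ℝ)..t, B k (x' (s - τ k)))
        = B k (∫ s in (-τ k)..(t + -τ k), x s) := by
      intro k
      have h1 : IntervalIntegrable (fun s => x' (s - τ k)) volume 0 t := by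
        have := (hx'int (0 - τ k) (t - τ k)).comp_sub_right (τ k)
        simpa using this
      rw [(B k).intervalIntegral_comp_comm h1]
      congr 1
      rw [intervalIntegral.integral_comp_sub_right (fun s => x' s) (τ k)]
      have e0 : (0:ℝ) - τ k = -τ k := by ring
      have e1 : t - τ k = t + -τ k := by ring
      rw [e0, e1]
      refine intervalIntegral.integral_congr (fun s hs => ?_)
      rw [uIcc_of_le (by linarith : -τ k ≤ t + -τ k)] at hs
      simp only [hx'def]
      rw [if_pos (by have h2 := (hτ k).2; have h3 := hs.1; linarith)]
    rw [hsum, hA']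
    simp_rw [hB']
    exact hxt
  -- conclusion
  have hae : ∀ᵐ t ∂(volume.restrict (Set.Ici (0:ℝ))),
      HasDerivAt (fun u => ∫ s in (0:ℝ)..u, g s) (g t) t :=
    ae_restrict_of_ae (my_ae_ftc hgloc)
  filter_upwards [hae, ae_restrict_mem measurableSet_Ici] with t hft ht
  have hgt : g t = A (x t) + ∑ k, B k (x (t - τ k)) := by
    have ht' : (0:ℝ) ≤ t := ht
    simp only [hgdef]
    congr 1
    · congr 1
      simp only [hx'def]
      rw [if_pos (by linarith)]
    · refine Finset.sum_congr rfl (fun k _ => ?_)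
      congr 1
      simp only [hx'def]
      rw [if_pos (by have := (hτ k).2; linarith)]
  rw [← hgt]
  have hF : HasDerivAt (fun u => ξ + ∫ s in (0:ℝ)..u, g s) (g t) t := hft.const_add ξ
  exact hF.hasDerivWithinAt.congr (fun y hy => key y hy) (key t ht)
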